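/- Let 0 < r < 1/2 < R with r·R = 1/4, let α > 0, Θ > 0, and suppose a sequence of functions g_k, each continuous on the closed annulus {r ≤ |z − 1/2| ≤ R} and holomorphic in its interior, satisfies ‖g_k‖_{C(r)} ≤ C₂ (e^Θ (r + 1/2))^{n_k(1+α)} and ‖g_k‖_{C(R)} ≤ C₇ e^{2Θ n_k'} (R + 1/2)^{n_k}, where n_k ≤ n_k' ≤ (1+α')n_k for constants. If moreover (1/(4R) + 1/2)^{1+α}(R + 1/2) < 1 and Θ is sufficiently small, then limsup_k ‖g_k‖_{C(1/2)}^{1/n_k'} < 1. -/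

import Mathlib

open Filter Real

lemma aux_circle (r R : ℝ) (hr0 : 0 < r) (hr : r < 1/2) (hR : 1/2 < R)
    (g : ℂ → ℂ)
    (hc : ContinuousOn g {z : ℂ | r ≤ dist z (1/2) ∧ dist z (1/2) ≤ R})
    (hd : DifferentiableOn ℂ g {z : ℂ | r < dist z (1/2) ∧ dist z (1/2) < R})
    (A B : ℝ)
    (hA : ∀ z ∈ Metric.sphere (1/2 : ℂ) r, ‖g z‖ ≤ A)
    (hB : ∀ z ∈ Metric.sphere (1/2 : ℂ) R, ‖g z‖ ≤ B)
    (m : ℤ) {z : ℂ} (hz : z ∈ Metric.sphere (1/2 : ℂ) (1/2)) :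
    ‖g z‖ * (1/2 : ℝ) ^ m ≤ max (A * r ^ m) (B * R ^ m) := by
  set U : Set ℂ := {z : ℂ | r < dist z (1/2) ∧ dist z (1/2) < R} with hU
  set K : Set ℂ := {z : ℂ | r ≤ dist z (1/2) ∧ dist z (1/2) ≤ R} with hK
  have hKclosed : IsClosed K := by
    have : K = (fun z : ℂ => dist z (1/2)) ⁻¹' (Set.Icc r R) := rfl
    rw [this]
    exact IsClosed.preimage (continuous_id.dist continuous_const) isClosed_Icc
  have hUopen : IsOpen U := by
    have : U = (fun z : ℂ => dist z (1/2)) ⁻¹' (Set.Ioo r R) := rfl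
    rw [this]
    exact IsOpen.preimage (continuous_id.dist continuous_const) isOpen_Ioo
  have hUK : U ⊆ K := fun w hw => ⟨hw.1.le, hw.2.le⟩
  have hclU : closure U ⊆ K := hKclosed.closure_subset_iff.2 hUK
  have hne : ∀ w ∈ K, w - (1/2 : ℂ) ≠ 0 := by
    intro w hw h0
    have : dist w (1/2 : ℂ) = 0 := by
      rw [dist_eq_norm, h0, norm_zero]
    linarith [hw.1]
  set h : ℂ → ℂ := fun w => g w * (w - 1/2) ^ m with hh
  have hbd : Bornology.IsBounded U := by
    apply (Metric.isBounded_ball (x := (1/2:ℂ)) (r := R)).subset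
    intro w hw; exact Metric.mem_ball.2 hw.2
  have hdc : DiffContOnCl ℂ h U := by
    constructor
    · apply hd.mul
      intro w hw
      exact (DifferentiableAt.zpow (f := fun y : ℂ => y - 1/2) (differentiableAt_id.sub_const _) (Or.inl (hne w (hUK hw)))).differentiableWithinAt
    · apply ContinuousOn.mul (hc.mono hclU)
      apply ContinuousOn.zpow₀ ((continuousOn_id.sub continuousOn_const))
      intro w hw; exact Or.inl (hne w (hclU hw))
  have hfr : ∀ w ∈ frontier U, ‖h w‖ ≤ max (A * r ^ m) (B * R ^ m) := by
    intro w hw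
    have hwK : w ∈ K := hclU (frontier_subset_closure hw)
    have hwnU : w ∉ U := by
      have := hUopen.frontier_eq ▸ hw
      exact this.2
    have hnorm : ‖h w‖ = ‖g w‖ * dist w (1/2 : ℂ) ^ m := by
      rw [hh]; simp only [norm_mul, norm_zpow, ← dist_eq_norm]
    have : dist w (1/2 : ℂ) = r ∨ dist w (1/2 : ℂ) = R := by
      by_contra hcon
      push_neg at hcon
      exact hwnU ⟨lt_of_le_of_ne hwK.1 (Ne.symm hcon.1), lt_of_le_of_ne hwK.2 hcon.2⟩
    rcases this with hd' | hd'
    · refine le_max_of_le_left ?_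
      rw [hnorm, hd']
      exact mul_le_mul_of_nonneg_right (hA w hd') (zpow_nonneg hr0.le m)
    · refine le_max_of_le_right ?_
      rw [hnorm, hd']
      exact mul_le_mul_of_nonneg_right (hB w hd') (zpow_nonneg (by linarith) m)
  have hzU : z ∈ U := ⟨by rw [Metric.mem_sphere.1 hz]; exact hr, by rw [Metric.mem_sphere.1 hz]; exact hR⟩
  have := Complex.norm_le_of_forall_mem_frontier_norm_le hbd hdc hfr (subset_closure hzU)
  have hhz : ‖h z‖ = ‖g z‖ * (1/2 : ℝ) ^ m := by
    rw [hh]; simp only [norm_mul, norm_zpow, ← dist_eq_norm, Metric.mem_sphere.1 hz]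
  rwa [hhz] at this

set_option maxHeartbeats 1000000 in
theorem stmt_17 (r R α α' : ℝ) (hr0 : 0 < r) (hr : r < 1/2) (hR : 1/2 < R)
    (hrR : r * R = 1/4) (hα : 0 < α) (hα' : 0 ≤ α')
    (hφ : (1 / (4 * R) + 1/2) ^ (1 + α) * (R + 1/2) < 1) :
    ∃ Θ₀ > (0 : ℝ), ∀ Θ : ℝ, 0 < Θ → Θ < Θ₀ →
      ∀ C₂ C₇ : ℝ, 0 < C₂ → 0 < C₇ →
      ∀ n n' : ℕ → ℕ, (∀ k, n k ≤ n' k) → (∀ k, (n' k : ℝ) ≤ (1 + α') * n k) →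
      Filter.Tendsto n Filter.atTop Filter.atTop →
      ∀ g : ℕ → ℂ → ℂ,
        (∀ k, ContinuousOn (g k) {z : ℂ | r ≤ dist z (1/2) ∧ dist z (1/2) ≤ R}) →
        (∀ k, DifferentiableOn ℂ (g k) {z : ℂ | r < dist z (1/2) ∧ dist z (1/2) < R}) →
        (∀ k, ∀ z ∈ Metric.sphere (1/2 : ℂ) r,
          ‖g k z‖ ≤ C₂ * (Real.exp Θ * (r + 1/2)) ^ ((n k : ℝ) * (1 + α))) →
        (∀ k, ∀ z ∈ Metric.sphere (1/2 : ℂ) R,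
          ‖g k z‖ ≤ C₇ * Real.exp (2 * Θ * (n' k)) * (R + 1/2) ^ (n k)) →
        Filter.limsup
          (fun k => (sSup ((fun z => ‖g k z‖) '' Metric.sphere (1/2 : ℂ) (1/2)))
            ^ ((1 : ℝ) / (n' k))) Filter.atTop < 1 := by
  have hR0 : (0:ℝ) < R := by linarith
  have hrdef : r = 1 / (4 * R) := by
    rw [eq_div_iff (by positivity)]
    linear_combination 4 * hrR
  rw [show (1 / (4 * R) : ℝ) = r from hrdef.symm] at hφ
  have ha0 : (0:ℝ) < r + 1/2 := by linarith
  have hb1 : (1:ℝ) < R + 1/2 := by linarith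
  have hb0 : (0:ℝ) < R + 1/2 := by linarith
  set φ : ℝ := (r + 1/2) ^ (1 + α) * (R + 1/2) with hφdef
  have hφ0 : 0 < φ := mul_pos (Real.rpow_pos_of_pos ha0 _) hb0
  have hlogφ : Real.log φ < 0 := Real.log_neg hφ0 hφ
  set δ : ℝ := -Real.log φ / (2 * (1 + α')) with hδdef
  have hδ0 : 0 < δ := div_pos (neg_pos.2 hlogφ) (by linarith)
  clear_value φ
  set τ : ℝ := (1 + α)/2 + 1 with hτdef
  have hτ0 : (0:ℝ) < τ := by rw [hτdef]; linarith
  clear_value δ τ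
  refine ⟨δ / (2 * τ), div_pos hδ0 (by linarith), ?_⟩
  intro Θ hΘ0 hΘΘ₀ C₂ C₇ hC₂ hC₇ n n' hnn' hn'α hntop g hgc hgd hg2 hg7
  set s : ℝ := 2 * R with hs
  have hs1 : (1:ℝ) < s := by rw [hs]; linarith
  have hs0 : (0:ℝ) < s := by linarith
  set L : ℝ := Real.log s with hLdef
  have hL0 : 0 < L := Real.log_pos hs1
  set A : ℕ → ℝ := fun k => C₂ * (Real.exp Θ * (r + 1/2)) ^ ((n k : ℝ) * (1 + α)) with hAdef
  set B : ℕ → ℝ := fun k => C₇ * Real.exp (2 * Θ * (n' k)) * (R + 1/2) ^ (n k) with hBdef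
  have hA0 : ∀ k, 0 < A k := fun k =>
    mul_pos hC₂ (Real.rpow_pos_of_pos (mul_pos (Real.exp_pos _) ha0) _)
  have hB0 : ∀ k, 0 < B k := fun k =>
    mul_pos (mul_pos hC₇ (Real.exp_pos _)) (pow_pos hb0 _)
  set M : ℕ → ℝ := fun k => s * Real.sqrt (A k * B k) with hMdef
  have hM0 : ∀ k, 0 < M k := fun k =>
    mul_pos hs0 (Real.sqrt_pos.2 (mul_pos (hA0 k) (hB0 k)))
  have hsqrt : ∀ k, Real.sqrt (A k * B k)
      = Real.exp ((Real.log (A k) + Real.log (B k)) / 2) := by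
    intro k
    have h2 : Real.exp ((Real.log (A k) + Real.log (B k)) / 2) ^ 2 = A k * B k := by
      rw [sq, ← Real.exp_add]
      rw [show (Real.log (A k) + Real.log (B k))/2 + (Real.log (A k) + Real.log (B k))/2
        = Real.log (A k) + Real.log (B k) by ring]
      rw [Real.exp_add, Real.exp_log (hA0 k), Real.exp_log (hB0 k)]
    rw [← h2, Real.sqrt_sq (Real.exp_pos _).le]
  -- key pointwise bound on the middle circle
  have key : ∀ k, ∀ z ∈ Metric.sphere (1/2 : ℂ) (1/2), ‖g k z‖ ≤ M k := by
    intro k z hz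
    set m₀ : ℝ := Real.log (A k / B k) / (2 * L) with hm₀def
    set m : ℤ := ⌈m₀⌉ with hmdef
    have hm₀L : m₀ * (2 * L) = Real.log (A k) - Real.log (B k) := by
      rw [hm₀def, div_mul_cancel₀ _ (by positivity)]
      exact Real.log_div (hA0 k).ne' (hB0 k).ne'
    have hsrpow : ∀ x : ℝ, s ^ x = Real.exp (x * L) := fun x => by
      rw [Real.rpow_def_of_pos hs0, mul_comm]
    have hmlb : m₀ ≤ (m : ℝ) := Int.le_ceil m₀
    have hmub : (m : ℝ) < m₀ + 1 := Int.ceil_lt_add_one m₀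
    have claim1 : A k * s ^ (-(m:ℝ)) ≤ Real.sqrt (A k * B k) := by
      rw [← Real.log_le_log_iff (mul_pos (hA0 k) (Real.rpow_pos_of_pos hs0 _))
        (Real.sqrt_pos.2 (mul_pos (hA0 k) (hB0 k))),
        Real.log_mul (hA0 k).ne' (Real.rpow_pos_of_pos hs0 _).ne',
        Real.log_rpow hs0, hsqrt k, Real.log_exp, ← hLdef]
      nlinarith [hm₀L, hL0, hmlb]
    have claim2 : B k * s ^ ((m:ℝ)) ≤ s * Real.sqrt (A k * B k) := by
      rw [← Real.log_le_log_iff (mul_pos (hB0 k) (Real.rpow_pos_of_pos hs0 _))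
        (mul_pos hs0 (Real.sqrt_pos.2 (mul_pos (hA0 k) (hB0 k)))),
        Real.log_mul (hB0 k).ne' (Real.rpow_pos_of_pos hs0 _).ne',
        Real.log_rpow hs0, hsqrt k,
        Real.log_mul hs0.ne' (Real.exp_pos _).ne', Real.log_exp, ← hLdef]
      nlinarith [hm₀L, hL0, hmub]
    have hcast1 : s ^ (-(m:ℝ)) = s ^ (-m : ℤ) := by
      rw [← Real.rpow_intCast s (-m)]; norm_num
    have hcast2 : s ^ ((m:ℝ)) = s ^ (m : ℤ) := by
      rw [← Real.rpow_intCast s m]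
    have h2pos : (0:ℝ) < (1/2 : ℝ) ^ m := zpow_pos (by norm_num) m
    rw [← mul_le_mul_iff_of_pos_right h2pos]
    refine le_trans (aux_circle r R hr0 hr hR (g k) (hgc k) (hgd k) (A k) (B k)
      (hg2 k) (hg7 k) m hz) ?_
    have hrm : (r:ℝ) ^ m = (1/2 : ℝ) ^ m * s ^ (-m : ℤ) := by
      have hr' : r = (1/2) * s⁻¹ := by
        rw [hrdef, hs]; field_simp; ring
      rw [hr', mul_zpow, inv_zpow, ← zpow_neg]
    have hRm : (R:ℝ) ^ m = (1/2 : ℝ) ^ m * s ^ (m : ℤ) := by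
      have hR' : R = (1/2) * s := by rw [hs]; ring
      rw [hR', mul_zpow]
    have hsqnn : (0:ℝ) ≤ Real.sqrt (A k * B k) := Real.sqrt_nonneg _
    apply max_le
    · rw [hrm]
      calc A k * ((1/2:ℝ) ^ m * s ^ (-m : ℤ))
          = (A k * s ^ (-(m:ℝ))) * (1/2:ℝ) ^ m := by rw [hcast1]; ring
        _ ≤ Real.sqrt (A k * B k) * (1/2:ℝ) ^ m :=
            mul_le_mul_of_nonneg_right claim1 h2pos.le
        _ ≤ M k * (1/2:ℝ) ^ m := by
            refine mul_le_mul_of_nonneg_right ?_ h2pos.le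
            show Real.sqrt (A k * B k) ≤ s * Real.sqrt (A k * B k)
            nlinarith
    · rw [hRm]
      calc B k * ((1/2:ℝ) ^ m * s ^ (m : ℤ))
          = (B k * s ^ ((m:ℝ))) * (1/2:ℝ) ^ m := by rw [hcast2]; ring
        _ ≤ (s * Real.sqrt (A k * B k)) * (1/2:ℝ) ^ m :=
            mul_le_mul_of_nonneg_right claim2 h2pos.le
        _ = M k * (1/2:ℝ) ^ m := rfl
  -- sSup bounds
  have hsup : ∀ k, sSup ((fun z => ‖g k z‖) '' Metric.sphere (1/2 : ℂ) (1/2)) ≤ M k := by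
    intro k
    apply Real.sSup_le _ (hM0 k).le
    rintro y ⟨z, hz, rfl⟩
    exact key k z hz
  have hsup0 : ∀ k, 0 ≤ sSup ((fun z => ‖g k z‖) '' Metric.sphere (1/2 : ℂ) (1/2)) := by
    intro k
    apply Real.sSup_nonneg
    rintro y ⟨z, hz, rfl⟩
    exact norm_nonneg _
  -- eventual bound
  have hn'top : Tendsto (fun k => ((n' k : ℕ) : ℝ)) atTop atTop :=
    tendsto_natCast_atTop_atTop.comp (tendsto_atTop_mono hnn' hntop)
  set c₀ : ℝ := L + (Real.log C₂ + Real.log C₇) / 2 with hc₀def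
  clear_value c₀
  have hev1 : ∀ᶠ k in atTop, c₀ ≤ δ/4 * (n' k : ℝ) := by
    filter_upwards [hn'top.eventually_ge_atTop (4 * c₀ / δ)] with k hk
    rw [div_le_iff₀ (by positivity)] at hk
    nlinarith
  have hev2 : ∀ᶠ k in atTop, 1 ≤ n' k :=
    (tendsto_atTop_mono hnn' hntop).eventually_ge_atTop 1
  have hq : ∀ᶠ k in atTop,
      (sSup ((fun z => ‖g k z‖) '' Metric.sphere (1/2 : ℂ) (1/2))) ^ ((1:ℝ)/(n' k))
        ≤ Real.exp (-δ/4) := by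
    filter_upwards [hev1, hev2] with k hk1 hk2
    have hN'0 : (0:ℝ) < (n' k : ℝ) := by exact_mod_cast hk2
    refine le_trans (Real.rpow_le_rpow (hsup0 k) (hsup k) (by positivity)) ?_
    rw [Real.rpow_def_of_pos (hM0 k), Real.exp_le_exp, mul_one_div, div_le_iff₀ hN'0]
    -- compute log (M k)
    have hlA : Real.log (A k) = Real.log C₂ + (n k : ℝ) * (1 + α) * (Θ + Real.log (r + 1/2)) := by
      rw [hAdef]
      rw [Real.log_mul hC₂.ne' (Real.rpow_pos_of_pos (mul_pos (Real.exp_pos _) ha0) _).ne',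
        Real.log_rpow (mul_pos (Real.exp_pos _) ha0),
        Real.log_mul (Real.exp_pos _).ne' ha0.ne', Real.log_exp]
    have hlB : Real.log (B k) = Real.log C₇ + 2 * Θ * (n' k : ℝ) + (n k : ℝ) * Real.log (R + 1/2) := by
      rw [hBdef]
      rw [Real.log_mul (mul_pos hC₇ (Real.exp_pos _)).ne' (pow_pos hb0 _).ne',
        Real.log_mul hC₇.ne' (Real.exp_pos _).ne', Real.log_exp, Real.log_pow]
    have hlφ : Real.log φ = (1 + α) * Real.log (r + 1/2) + Real.log (R + 1/2) := by
      rw [hφdef, Real.log_mul (Real.rpow_pos_of_pos ha0 _).ne' hb0.ne', Real.log_rpow ha0]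
    have hlM : Real.log (M k) = c₀ + Θ * ((n k : ℝ) * (1 + α)/2 + (n' k : ℝ))
        + ((n k : ℝ)/2) * Real.log φ := by
      rw [hMdef]
      rw [Real.log_mul hs0.ne' (Real.sqrt_pos.2 (mul_pos (hA0 k) (hB0 k))).ne',
        hsqrt k, Real.log_exp, hlA, hlB, hlφ, hc₀def]
      ring
    rw [hlM]
    -- arithmetic
    have hNN' : (n k : ℝ) ≤ (n' k : ℝ) := Nat.cast_le.2 (hnn' k)
    have hN0 : (0:ℝ) ≤ (n k : ℝ) := Nat.cast_nonneg _
    have hlogφδ : Real.log φ = -(δ * (2 * (1 + α'))) := by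
      rw [hδdef]; field_simp
    have hΘτ : Θ * τ ≤ δ/2 := by
      have := (lt_div_iff₀ (by positivity : (0:ℝ) < 2 * τ)).1 hΘΘ₀
      nlinarith
    have piece2 : Θ * ((n k : ℝ) * (1 + α)/2 + (n' k : ℝ)) ≤ δ/2 * (n' k : ℝ) := by
      have h1 : (n k : ℝ) * (1 + α)/2 + (n' k : ℝ) ≤ τ * (n' k : ℝ) := by
        rw [hτdef]; nlinarith
      nlinarith [mul_le_mul_of_nonneg_left h1 hΘ0.le,
        mul_le_mul_of_nonneg_right hΘτ hN'0.le]
    have piece3 : ((n k : ℝ)/2) * Real.log φ ≤ -δ * (n' k : ℝ) := by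
      rw [hlogφδ]
      nlinarith [hn'α k, hδ0]
    linarith
  have hcob : Filter.IsCoboundedUnder (· ≤ ·) atTop
      (fun k => (sSup ((fun z => ‖g k z‖) '' Metric.sphere (1/2 : ℂ) (1/2)))
        ^ ((1:ℝ)/(n' k))) :=
    Filter.isCoboundedUnder_le_of_eventually_le atTop
      (Eventually.of_forall fun k => Real.rpow_nonneg (hsup0 k) _)
  refine lt_of_le_of_lt (Filter.limsup_le_of_le hcob hq) ?_
  rw [Real.exp_lt_one_iff]
  linarith
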